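/- Let u ∈ (0,1), a = √(1/u² - 1), b ∈ (0,1), σ ∈ (0, 1/2), and set c = √(a² + b²), Υ(a,b) = (c - 2b)² + (1 - b²), and μ = 1 - |1 - 2u|^{2σ}. Then Υ(a,b)^{-σ} - Υ(a,0)^{-σ} ≤ μ · Υ(a,b)^{-σ}. -/

import Mathlib

/-! With `u² (a² + 1) = 1`, expanding the square gives `Υ(a,b) = Υ(a,0) + 4b(b - c)`, and
`(1 - 2u)² Υ(a,0) ≤ Υ(a,b)` reduces to `u b c ≤ 1 - u + u b²`. For `b ≤ 0` this is clear; for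
`0 < b ≤ 1` both sides are nonnegative and the difference of their squares is `(1 - u)² (1 - b²)`.
Taking `σ`-th powers of `(1 - 2u)² / Υ(a,b) ≤ 1 / Υ(a,0)` gives the claim. -/

open Real

noncomputable def upsilon (a b : ℝ) : ℝ := (√(a ^ 2 + b ^ 2) - 2 * b) ^ 2 + (1 - b ^ 2)

lemma upsilon_eq (a b : ℝ) : upsilon a b = a ^ 2 + 1 + 4 * b * (b - √(a ^ 2 + b ^ 2)) := by
  have hc := sq_sqrt (add_nonneg (sq_nonneg a) (sq_nonneg b))
  unfold upsilon
  linear_combination hc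

lemma upsilon_zero (a : ℝ) : upsilon a 0 = a ^ 2 + 1 := by
  simp [upsilon_eq]

lemma mul_mul_sqrt_le {u a b : ℝ} (hu : 0 ≤ u) (hua : u ^ 2 * (a ^ 2 + 1) = 1) (hb : b ≤ 1) :
    u * b * √(a ^ 2 + b ^ 2) ≤ 1 - u + u * b ^ 2 := by
  have hu1 : u ≤ 1 := by nlinarith [sq_nonneg a]
  rcases le_or_gt b 0 with hb0 | hb0
  · have : u * b * √(a ^ 2 + b ^ 2) ≤ 0 :=
      mul_nonpos_of_nonpos_of_nonneg (mul_nonpos_of_nonneg_of_nonpos hu hb0) (sqrt_nonneg _)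
    nlinarith
  · have hc := sq_sqrt (add_nonneg (sq_nonneg a) (sq_nonneg b))
    have hsq : (1 - u + u * b ^ 2) ^ 2 - (u * b * √(a ^ 2 + b ^ 2)) ^ 2 = (1 - u) ^ 2 * (1 - b ^ 2) := by
      linear_combination (-(u * b) ^ 2) * hc - b ^ 2 * hua
    refine le_trans (le_abs_self _) (abs_le_of_sq_le_sq ?_ (by positivity))
    nlinarith [mul_nonneg (sq_nonneg (1 - u)) (show 0 ≤ 1 - b ^ 2 by nlinarith)]

lemma sq_one_sub_two_mul_mul_le_upsilon {u a b : ℝ} (hu : 0 ≤ u) (hua : u ^ 2 * (a ^ 2 + 1) = 1)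
    (hb : b ≤ 1) : (1 - 2 * u) ^ 2 * (a ^ 2 + 1) ≤ upsilon a b := by
  have key := mul_mul_sqrt_le hu hua hb
  rw [upsilon_eq]
  linear_combination (4 * u * (a ^ 2 + 1)) * key + (4 * b ^ 2 - 4 * b * √(a ^ 2 + b ^ 2)) * hua

lemma rpow_mul_rpow_neg_le {k x y σ : ℝ} (hk : 0 ≤ k) (hy : 0 < y) (hkyx : k * y ≤ x)
    (hσ : 0 < σ) : k ^ σ * x ^ (-σ) ≤ y ^ (-σ) := by
  rcases (show 0 ≤ x by nlinarith).eq_or_lt with rfl | hx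
  · rw [zero_rpow (neg_ne_zero.mpr hσ.ne'), mul_zero]
    positivity
  · calc k ^ σ * x ^ (-σ) = (k / x) ^ σ := by
          rw [div_rpow hk hx.le, rpow_neg hx.le, div_eq_mul_inv]
      _ ≤ (1 / y) ^ σ := by
          refine rpow_le_rpow (by positivity) ?_ hσ.le
          rwa [div_le_div_iff₀ hx hy, one_mul]
      _ = y ^ (-σ) := by rw [one_div, inv_rpow hy.le, rpow_neg hy.le]

theorem upsilon_rpow_diff_le (u : ℝ) (hu0 : 0 < u) (hu1 : u < 1)
    (b : ℝ) (hb1 : b < 1) (σ : ℝ) (hσ0 : 0 < σ) :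
    let a := Real.sqrt (1 / u ^ 2 - 1)
    let c := Real.sqrt (a ^ 2 + b ^ 2)
    let Υ : ℝ → ℝ := fun b' => (Real.sqrt (a ^ 2 + b' ^ 2) - 2 * b') ^ 2 + (1 - b' ^ 2)
    let μ := 1 - |1 - 2 * u| ^ (2 * σ)
    Υ b ^ (-σ) - Υ 0 ^ (-σ) ≤ μ * Υ b ^ (-σ) := by
  intro a _ Υ μ
  have hua : u ^ 2 * (a ^ 2 + 1) = 1 := by
    rw [sq_sqrt (by rw [le_sub_iff_add_le, le_div_iff₀ (by positivity)]; nlinarith)]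
    field_simp
    ring
  have hbound : (1 - 2 * u) ^ 2 * upsilon a 0 ≤ upsilon a b := by
    rw [upsilon_zero]
    exact sq_one_sub_two_mul_mul_le_upsilon hu0.le hua hb1.le
  have hpow : |1 - 2 * u| ^ (2 * σ) = ((1 - 2 * u) ^ 2) ^ σ := by
    rw [← sq_abs, ← rpow_natCast, ← rpow_mul (abs_nonneg _), Nat.cast_ofNat]
  have hrpow := rpow_mul_rpow_neg_le (sq_nonneg _) (by rw [upsilon_zero]; positivity) hbound hσ0
  change upsilon a b ^ (-σ) - upsilon a 0 ^ (-σ) ≤ (1 - |1 - 2 * u| ^ (2 * σ)) * upsilon a b ^ (-σ)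
  rw [hpow]
  linarith
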